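/- arXiv:1006.5098 — 2 statements merged into one kernel-verified Lean document; each statement's English description precedes it below -/
import Mathlib

section
/- Let Q be a cost dioid, α : Σ → Σ# a function between finite state sets, P = (Σ, M, I, F) and P# = (Σ#, M#, I#, F#) quantitative programs. If (P, P#, α) is a correct abstraction, then ρ(P) ≤ ρ(P#) in the order of Q, where ρ denotes the long-run cost ρ(N) = ⨆_{k≥1} √[k]{ tr(N^k) } of the corresponding transition matrix. -/
/-!
The abstraction inequality `α↑ M ≤ M# α↑` propagates to powers, `α↑ Mᵏ ≤ M#ᵏ α↑`, because matrix
multiplication is monotone over an idempotent semiring. Evaluating both sides at `(α σ, σ)` gives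
`(Mᵏ) σ σ ≤ (M#ᵏ) (α σ) (α σ)`, hence `tr (Mᵏ) ≤ tr (M#ᵏ)`. Finally `k`-th roots are monotone: the
`k`-th power is injective and preserves binary joins, so `xᵏ ≤ yᵏ` forces `x ⊔ y = y`.
-/

open Matrix

abbrev IdemCommSemiring.ofLeIff {Q : Type*} [CommSemiring Q] [CompleteLattice Q]
    (hle : ∀ a b : Q, a ≤ b ↔ a + b = b) : IdemCommSemiring Q where
  __ := ‹CommSemiring Q›
  __ := ‹CompleteLattice Q›
  add_eq_sup a b := by
    have hidem : ∀ c : Q, c + c = c := fun c => (hle c c).1 le_rfl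
    refine le_antisymm ?_ (sup_le ?_ ?_)
    · rw [hle, add_assoc, (hle b _).1 le_sup_right, (hle a _).1 le_sup_left]
    · rw [hle, ← add_assoc, hidem]
    · rw [hle, add_comm a, ← add_assoc, hidem]

theorem le_of_pow_le_pow_of_pow_sup {Q : Type*} [Monoid Q] [SemilatticeSup Q] {n : ℕ}
    (hinj : Function.Injective fun x : Q => x ^ n)
    (hsup : ∀ x y : Q, (x ⊔ y) ^ n = x ^ n ⊔ y ^ n) {x y : Q} (h : x ^ n ≤ y ^ n) : x ≤ y :=
  sup_eq_right.1 <| hinj <| by simp only [hsup, sup_eq_right.2 h]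

namespace Matrix

variable {l m n : Type*}

section LinearLift

variable [DecidableEq n]

def linearLift (Q : Type*) [Zero Q] [One Q] (α : m → n) : Matrix n m Q :=
  of fun a σ => if α σ = a then 1 else 0

theorem mul_linearLift_apply {Q : Type*} [NonAssocSemiring Q] [Fintype n] (N : Matrix l n Q)
    (α : m → n) (i : l) (σ : m) : (N * linearLift Q α) i σ = N i (α σ) := by
  simp [linearLift, mul_apply]

end LinearLift

section CanonicallyOrdered

variable {Q : Type*} [Semiring Q] [PartialOrder Q] [CanonicallyOrderedAdd Q] [Fintype m]

theorem apply_le_linearLift_mul_apply [DecidableEq n] (α : m → n) (N : Matrix m l Q) (σ : m)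
    (j : l) : N σ j ≤ (linearLift Q α * N) (α σ) j := by
  simpa [linearLift, mul_apply] using
    Finset.single_le_sum_of_canonicallyOrdered (f := fun τ => linearLift Q α (α σ) τ * N τ j)
      (Finset.mem_univ σ)

variable [IsOrderedAddMonoid Q]

theorem mul_apply_le_mul_apply {A A' : Matrix l m Q} {B B' : Matrix m n Q}
    (hA : ∀ i j, A i j ≤ A' i j) (hB : ∀ i j, B i j ≤ B' i j) (i : l) (j : n) :
    (A * B) i j ≤ (A' * B') i j :=
  Finset.sum_le_sum fun k _ => mul_le_mul' (hA i k) (hB k j)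

theorem mul_pow_apply_le_pow_mul_apply [DecidableEq m] [Fintype n] [DecidableEq n]
    {A : Matrix n m Q} {M : Matrix m m Q} {M' : Matrix n n Q}
    (h : ∀ i j, (A * M) i j ≤ (M' * A) i j) (k : ℕ) (i : n) (j : m) :
    (A * M ^ k) i j ≤ (M' ^ k * A) i j := by
  induction k generalizing i j with
  | zero => simp
  | succ k ih =>
    calc (A * M ^ (k + 1)) i j = (A * M ^ k * M) i j := by rw [pow_succ, Matrix.mul_assoc]
      _ ≤ (M' ^ k * A * M) i j := mul_apply_le_mul_apply ih (fun _ _ => le_rfl) i j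
      _ = (M' ^ k * (A * M)) i j := by rw [Matrix.mul_assoc]
      _ ≤ (M' ^ k * (M' * A)) i j := mul_apply_le_mul_apply (fun _ _ => le_rfl) h i j
      _ = (M' ^ (k + 1) * A) i j := by rw [pow_succ, Matrix.mul_assoc]

theorem pow_apply_le_pow_apply_of_linearLift_mul_le [DecidableEq m] [Fintype n] [DecidableEq n]
    {α : m → n} {M : Matrix m m Q} {M' : Matrix n n Q}
    (h : ∀ i j, (linearLift Q α * M) i j ≤ (M' * linearLift Q α) i j) (k : ℕ) (σ : m) :
    (M ^ k) σ σ ≤ (M' ^ k) (α σ) (α σ) :=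
  calc (M ^ k) σ σ ≤ (linearLift Q α * M ^ k) (α σ) σ := apply_le_linearLift_mul_apply α _ σ σ
    _ ≤ (M' ^ k * linearLift Q α) (α σ) σ := mul_pow_apply_le_pow_mul_apply h k _ σ
    _ = (M' ^ k) (α σ) (α σ) := mul_linearLift_apply _ α _ σ

end CanonicallyOrdered

end Matrix

theorem stmt_7_general {Q : Type*} [CommSemiring Q] [CompleteLattice Q]
    (hle : ∀ a b : Q, a ≤ b ↔ a + b = b)
    (root : Q → ℕ → Q)
    (hroot : ∀ (q : Q) (n : ℕ), 1 ≤ n → root q n ^ n = q)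
    (hroot_unique : ∀ (q x : Q) (n : ℕ), 1 ≤ n → x ^ n = q → x = root q n)
    (hlsc : ∀ (n : ℕ), 1 ≤ n → ∀ X : Set Q, sSup X ^ n = ⨆ x ∈ X, x ^ n)
    {S S' : Type*} [Fintype S] [DecidableEq S] [Fintype S'] [DecidableEq S']
    (α : S → S') (M : Matrix S S Q)
    (M' : Matrix S' S' Q)
    (hcorrect : ∀ (a : S') (σ : S),
      ((Matrix.of fun a σ => if α σ = a then (1 : Q) else ⊥) * M) a σ ≤
        (M' * (Matrix.of fun a σ => if α σ = a then (1 : Q) else ⊥)) a σ) :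
    (⨆ (k : ℕ) (_ : 1 ≤ k), root (⨆ σ : S, (M ^ k) σ σ) k) ≤
      ⨆ (k : ℕ) (_ : 1 ≤ k), root (⨆ σ : S', (M' ^ k) σ σ) k := by
  let _ := IdemCommSemiring.ofLeIff hle
  have hlift : (Matrix.of fun a σ => if α σ = a then (1 : Q) else ⊥) = linearLift Q α := by
    simp only [linearLift, bot_eq_zero]
  rw [hlift] at hcorrect
  have root_mono : ∀ k, 1 ≤ k → Monotone (root · k) := fun k hk a b hab =>
    le_of_pow_le_pow_of_pow_sup
      (fun x y hxy => (hroot_unique _ x k hk hxy).trans (hroot_unique _ y k hk rfl).symm)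
      (fun x y => by rw [← sSup_pair, hlsc k hk, iSup_pair])
      (by simpa only [hroot _ k hk] using hab)
  refine iSup₂_le fun k hk => le_iSup₂_of_le k hk (root_mono k hk ?_)
  exact iSup_le fun σ => le_iSup_of_le (α σ)
    (pow_apply_le_pow_apply_of_linearLift_mul_le hcorrect k σ)

/-- Let `Q` be a cost dioid, `α : Σ → Σ#`, and `P = (Σ, M, I, F)`,
`P# = (Σ#, M#, I#, F#)` quantitative programs. If `(P, P#, α)` is a correct abstraction
then `ρ(P) ≤ ρ(P#)`, where `ρ(N) = ⨆ k ≥ 1, √[k]{tr (N ^ k)}`. -/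
theorem stmt_7 {Q : Type*} [CommSemiring Q] [CompleteLattice Q]
    (hidem : ∀ a : Q, a + a = a)
    (hle : ∀ a b : Q, a ≤ b ↔ a + b = b)
    (hsup : ∀ a b : Q, a ⊔ b = a + b)
    (hbot : (⊥ : Q) = 0)
    (hdistrib : ∀ (a : Q) (X : Set Q), a * sSup X = ⨆ x ∈ X, a * x)
    (root : Q → ℕ → Q)
    (hroot : ∀ (q : Q) (n : ℕ), 1 ≤ n → root q n ^ n = q)
    (hroot_unique : ∀ (q x : Q) (n : ℕ), 1 ≤ n → x ^ n = q → x = root q n)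
    (hlsc : ∀ (n : ℕ), 1 ≤ n → ∀ X : Set Q, sSup X ^ n = ⨆ x ∈ X, x ^ n)
    {S S' : Type*} [Fintype S] [DecidableEq S] [Fintype S'] [DecidableEq S']
    (α : S → S') (M : Matrix S S Q) (I F : Set S)
    (M' : Matrix S' S' Q) (I' F' : Set S')
    (hcorrect : ∀ (a : S') (σ : S),
      ((Matrix.of fun a σ => if α σ = a then (1 : Q) else ⊥) * M) a σ ≤
        (M' * (Matrix.of fun a σ => if α σ = a then (1 : Q) else ⊥)) a σ)
    (hI : α '' I ⊆ I') (hF : α '' F ⊆ F') :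
    (⨆ (k : ℕ) (_ : 1 ≤ k), root (⨆ σ : S, (M ^ k) σ σ) k) ≤
      ⨆ (k : ℕ) (_ : 1 ≤ k), root (⨆ σ : S', (M' ^ k) σ σ) k :=
  stmt_7_general hle root hroot hroot_unique hlsc α M M' hcorrect
end

section
/- Let Q be a selective cost dioid, Σ and Σ# finite sets, and let A ∈ Q^{Σ#×Σ}, M ∈ Q^{Σ×Σ}, M# ∈ Q^{Σ#×Σ#} with all entries of A equal to ⊥ or e, every column of A containing at least one entry equal to e, such that (M, M#, A) is a correct linear abstraction (A M ≤ M# A entrywise). Then the long-run costs satisfy ρ(M) ≤ ρ(M#), where ρ(N) = ⨆_{k≥1} √[k]{ tr(N^k) }. -/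
/-!
Since the order is the canonical one, `Q` is a canonically ordered semiring with `⊥ = 0`, and
selectivity makes every finite sum equal to one of its terms; in particular
`tr (Mᵏ) = q := (Mᵏ)_{σσ}` for some `σ`. Iterating the abstraction inequality gives
`A Mᵏ ≤ M#ᵏ A`. If `q ≠ ⊥` and `A_{aσ} = e`, then
`q ≤ (A Mᵏ)_{aσ} ≤ (M#ᵏ A)_{aσ} = (M#ᵏ)_{ab} A_{bσ}` for some `b`, and `A_{bσ} = e` since `q ≠ ⊥`.
Following such steps through the finite set `Σ#` closes a cycle of some length `m`, whence
`q^m ≤ tr (M#^{km})`, and `√[k]{q} = √[km]{q^m} ≤ √[km]{tr (M#^{km})} ≤ ρ(M#)`.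
-/

open Matrix

lemma canonicallyOrderedAdd_of_le_iff_add_eq {Q : Type*} [AddCommSemigroup Q] [PartialOrder Q]
    (hle : ∀ a b : Q, a ≤ b ↔ a + b = b) : CanonicallyOrderedAdd Q := by
  have hidem (a : Q) : a + a = a := (hle a a).1 le_rfl
  refine
    { exists_add_of_le := fun {a b} h => ⟨b, ((hle a b).1 h).symm⟩
      le_add_self := fun a b => ?_
      le_self_add := fun a b => ?_ }
  · rw [hle, add_left_comm, hidem]
  · rw [hle, ← add_assoc, hidem]

lemma Finset.exists_sum_eq_of_selective {Q ι : Type*} [AddCommMonoid Q]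
    (hsel : ∀ a b : Q, a + b = a ∨ a + b = b) (s : Finset ι) (hs : s.Nonempty) (f : ι → Q) :
    ∃ i ∈ s, ∑ j ∈ s, f j = f i := by
  classical
  induction hs using Finset.Nonempty.cons_induction with
  | singleton a => exact ⟨a, by simp, by simp⟩
  | cons a s _ _ ih =>
    obtain ⟨i, hi, hsum⟩ := ih
    rw [Finset.sum_cons, hsum]
    rcases hsel (f a) (f i) with h | h
    · exact ⟨a, Finset.mem_cons_self a s, h⟩
    · exact ⟨i, Finset.mem_cons_of_mem hi, h⟩

lemma root_pow_mul {Q : Type*} [Monoid Q] (root : Q → ℕ → Q)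
    (hroot : ∀ (q : Q) (n : ℕ), 1 ≤ n → root q n ^ n = q)
    (hroot_unique : ∀ (q x : Q) (n : ℕ), 1 ≤ n → x ^ n = q → x = root q n)
    (q : Q) {k m : ℕ} (hk : 1 ≤ k) (hm : 1 ≤ m) : root (q ^ m) (k * m) = root q k :=
  (hroot_unique _ _ _ (Nat.one_le_iff_ne_zero.2 (by positivity))
    (by rw [pow_mul, hroot q k hk])).symm

section CanonicallyOrdered

variable {Q : Type*} [CommSemiring Q] [PartialOrder Q] [CanonicallyOrderedAdd Q]

lemma le_total_of_selective (hsel : ∀ a b : Q, a + b = a ∨ a + b = b) (a b : Q) :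
    a ≤ b ∨ b ≤ a :=
  (hsel a b).elim (fun h => Or.inr (h ▸ le_add_self)) (fun h => Or.inl (h ▸ le_self_add))

lemma root_mono (hsel : ∀ a b : Q, a + b = a ∨ a + b = b) (root : Q → ℕ → Q)
    (hroot : ∀ (q : Q) (n : ℕ), 1 ≤ n → root q n ^ n = q) {p q : Q} {n : ℕ} (hn : 1 ≤ n)
    (hpq : p ≤ q) : root p n ≤ root q n := by
  rcases le_total_of_selective hsel (root p n) (root q n) with h | h
  · exact h
  · have hqp : q ≤ p :=
      (hroot q n hn).symm.trans_le ((pow_le_pow_left' h n).trans_eq (hroot p n hn))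
    rw [le_antisymm hpq hqp]

end CanonicallyOrdered

section Matrix

variable {Q : Type*} [CommSemiring Q] [PartialOrder Q] [CanonicallyOrderedAdd Q]
  [IsOrderedAddMonoid Q] {S S' : Type*} [Fintype S] [Fintype S']

lemma Matrix.mul_apply_mono {ι κ : Type*} {A A' : Matrix ι S Q} {B B' : Matrix S κ Q}
    (hA : ∀ i j, A i j ≤ A' i j) (hB : ∀ i j, B i j ≤ B' i j) (i : ι) (k : κ) :
    (A * B) i k ≤ (A' * B') i k :=
  Finset.sum_le_sum fun j _ => mul_le_mul' (hA i j) (hB j k)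

lemma Matrix.apply_mul_apply_le_mul_apply {ι κ : Type*} (A : Matrix ι S Q) (B : Matrix S κ Q)
    (i : ι) (j : S) (k : κ) : A i j * B j k ≤ (A * B) i k :=
  Finset.single_le_sum (f := fun j => A i j * B j k) (fun _ _ => zero_le) (Finset.mem_univ j)

variable [DecidableEq S] [DecidableEq S']

lemma mul_pow_le_pow_mul_of_mul_le_mul {A : Matrix S' S Q} {M : Matrix S S Q}
    {M' : Matrix S' S' Q} (hcorrect : ∀ a σ, (A * M) a σ ≤ (M' * A) a σ) (k : ℕ) (a : S')
    (σ : S) : (A * M ^ k) a σ ≤ (M' ^ k * A) a σ := by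
  induction k generalizing a σ with
  | zero => simp
  | succ k ih =>
    calc (A * M ^ (k + 1)) a σ = (A * M ^ k * M) a σ := by rw [pow_succ, Matrix.mul_assoc]
      _ ≤ (M' ^ k * A * M) a σ := Matrix.mul_apply_mono ih (fun _ _ => le_rfl) a σ
      _ = (M' ^ k * (A * M)) a σ := by rw [Matrix.mul_assoc]
      _ ≤ (M' ^ k * (M' * A)) a σ := Matrix.mul_apply_mono (fun _ _ => le_rfl) hcorrect a σ
      _ = (M' ^ (k + 1) * A) a σ := by rw [pow_succ, Matrix.mul_assoc]

lemma pow_le_pow_apply_of_chain (N : Matrix S' S' Q) (q : Q) (c : ℕ → S')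
    (hc : ∀ i, q ≤ N (c i) (c (i + 1))) (n i : ℕ) : q ^ n ≤ (N ^ n) (c i) (c (i + n)) := by
  induction n with
  | zero => simp
  | succ n ih =>
    calc q ^ (n + 1) = q ^ n * q := pow_succ q n
      _ ≤ (N ^ n) (c i) (c (i + n)) * N (c (i + n)) (c (i + n + 1)) := mul_le_mul' ih (hc _)
      _ ≤ (N ^ (n + 1)) (c i) (c (i + (n + 1))) := by
        rw [pow_succ, ← add_assoc]; exact Matrix.apply_mul_apply_le_mul_apply _ _ _ _ _

lemma exists_pow_le_pow_apply_self_of_chain (N : Matrix S' S' Q) (q : Q) (c : ℕ → S')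
    (hc : ∀ i, q ≤ N (c i) (c (i + 1))) : ∃ a m, 1 ≤ m ∧ q ^ m ≤ (N ^ m) a a := by
  obtain ⟨i, j, hij, hcij⟩ :=
    Set.finite_univ.exists_lt_map_eq_of_forall_mem (f := c) fun _ => Set.mem_univ _
  refine ⟨c i, j - i, by omega, ?_⟩
  have := pow_le_pow_apply_of_chain N q c hc (j - i) i
  rwa [Nat.add_sub_cancel' hij.le, ← hcij] at this

lemma exists_pow_le_pow_apply_self_of_forall_exists (N : Matrix S' S' Q) (q : Q)
    (P : S' → Prop) {a₀ : S'} (h₀ : P a₀) (hstep : ∀ a, P a → ∃ b, P b ∧ q ≤ N a b) :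
    ∃ a m, 1 ≤ m ∧ q ^ m ≤ (N ^ m) a a := by
  choose next hnextP hnext using hstep
  let c (n : ℕ) : {a // P a} := (fun a => ⟨next a.1 a.2, hnextP _ _⟩)^[n] ⟨a₀, h₀⟩
  refine exists_pow_le_pow_apply_self_of_chain N q (fun n => (c n).1) fun i => ?_
  rw [show c (i + 1) = _ from Function.iterate_succ_apply' _ i _]
  exact hnext _ _

end Matrix

section CompleteLattice

variable {Q : Type*} [CommSemiring Q] [CompleteLattice Q] [CanonicallyOrderedAdd Q]

lemma iSup_root_le_of_forall_exists_pow_le (hsel : ∀ a b : Q, a + b = a ∨ a + b = b)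
    (root : Q → ℕ → Q) (hroot : ∀ (q : Q) (n : ℕ), 1 ≤ n → root q n ^ n = q)
    (hroot_unique : ∀ (q x : Q) (n : ℕ), 1 ≤ n → x ^ n = q → x = root q n) (t t' : ℕ → Q)
    (h : ∀ k, 1 ≤ k → ∃ m, 1 ≤ m ∧ t k ^ m ≤ t' (k * m)) :
    ⨆ (k : ℕ) (_ : 1 ≤ k), root (t k) k ≤ ⨆ (k : ℕ) (_ : 1 ≤ k), root (t' k) k := by
  refine iSup₂_le fun k hk => ?_
  obtain ⟨m, hm, hle⟩ := h k hk
  have hkm : 1 ≤ k * m := Nat.one_le_iff_ne_zero.2 (by positivity)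
  calc root (t k) k = root (t k ^ m) (k * m) := (root_pow_mul root hroot hroot_unique _ hk hm).symm
    _ ≤ root (t' (k * m)) (k * m) := root_mono hsel root hroot hkm hle
    _ ≤ _ := le_iSup₂_of_le (f := fun k (_ : 1 ≤ k) => root (t' k) k) (k * m) hkm le_rfl

variable [IsOrderedAddMonoid Q]

lemma exists_iSup_eq_of_selective
    (hsel : ∀ a b : Q, a + b = a ∨ a + b = b) {ι : Type*} [Fintype ι] [Nonempty ι]
    (f : ι → Q) : ∃ i, ⨆ j, f j = f i := by
  obtain ⟨i, -, hi⟩ := Finset.univ.exists_sum_eq_of_selective hsel Finset.univ_nonempty f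
  refine ⟨i, le_antisymm (iSup_le fun j => ?_) (le_iSup f i)⟩
  exact (Finset.single_le_sum (fun _ _ => zero_le) (Finset.mem_univ j)).trans_eq hi

variable {S S' : Type*} [Fintype S] [Fintype S'] [DecidableEq S] [DecidableEq S']
  {A : Matrix S' S Q} {M : Matrix S S Q} {M' : Matrix S' S' Q}

lemma exists_step_of_abstraction (hsel : ∀ a b : Q, a + b = a ∨ a + b = b)
    (hA : ∀ a σ, A a σ = 0 ∨ A a σ = 1) (hcorrect : ∀ a σ, (A * M) a σ ≤ (M' * A) a σ)
    {k : ℕ} {σ : S} (hq : (M ^ k) σ σ ≠ 0) {a : S'} (ha : A a σ = 1) :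
    ∃ b, A b σ = 1 ∧ (M ^ k) σ σ ≤ (M' ^ k) a b := by
  have h : (M ^ k) σ σ ≤ (M' ^ k * A) a σ :=
    calc (M ^ k) σ σ = A a σ * (M ^ k) σ σ := by rw [ha, one_mul]
      _ ≤ (A * M ^ k) a σ := Matrix.apply_mul_apply_le_mul_apply _ _ _ _ _
      _ ≤ (M' ^ k * A) a σ := mul_pow_le_pow_mul_of_mul_le_mul hcorrect k a σ
  obtain ⟨b, -, hb⟩ := Finset.univ.exists_sum_eq_of_selective hsel ⟨a, Finset.mem_univ a⟩
    fun b => (M' ^ k) a b * A b σ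
  rw [Matrix.mul_apply, hb] at h
  rcases hA b σ with h0 | h1
  · rw [h0, mul_zero, nonpos_iff_eq_zero] at h
    exact absurd h hq
  · exact ⟨b, h1, by rwa [h1, mul_one] at h⟩

lemma exists_pow_trace_le_of_abstraction (hsel : ∀ a b : Q, a + b = a ∨ a + b = b)
    (hA : ∀ a σ, A a σ = 0 ∨ A a σ = 1) (hAcol : ∀ σ, ∃ a, A a σ = 1)
    (hcorrect : ∀ a σ, (A * M) a σ ≤ (M' * A) a σ) (k : ℕ) :
    ∃ m, 1 ≤ m ∧ (⨆ σ, (M ^ k) σ σ) ^ m ≤ ⨆ a, (M' ^ (k * m)) a a := by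
  rcases isEmpty_or_nonempty S with hS | hS
  · exact ⟨1, le_rfl, by simp⟩
  obtain ⟨σ, hσ⟩ := exists_iSup_eq_of_selective hsel fun σ => (M ^ k) σ σ
  rw [hσ]
  by_cases hq : (M ^ k) σ σ = 0
  · exact ⟨1, le_rfl, by simp [hq]⟩
  obtain ⟨a₀, ha₀⟩ := hAcol σ
  obtain ⟨a, m, hm, hle⟩ := exists_pow_le_pow_apply_self_of_forall_exists (M' ^ k) _
    (fun a => A a σ = 1) ha₀ fun _ ha => exists_step_of_abstraction hsel hA hcorrect hq ha
  exact ⟨m, hm, hle.trans (pow_mul M' k m ▸ le_iSup (fun a => ((M' ^ k) ^ m) a a) a)⟩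

end CompleteLattice

theorem stmt_10_general {Q : Type*} [CommSemiring Q] [CompleteLattice Q]
    (hle : ∀ a b : Q, a ≤ b ↔ a + b = b)
    (root : Q → ℕ → Q)
    (hroot : ∀ (q : Q) (n : ℕ), 1 ≤ n → root q n ^ n = q)
    (hroot_unique : ∀ (q x : Q) (n : ℕ), 1 ≤ n → x ^ n = q → x = root q n)
    (hsel : ∀ a b : Q, a + b = a ∨ a + b = b)
    {S S' : Type*} [Fintype S] [DecidableEq S] [Fintype S'] [DecidableEq S']
    (A : Matrix S' S Q) (M : Matrix S S Q) (M' : Matrix S' S' Q)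
    (hA : ∀ (a : S') (σ : S), A a σ = ⊥ ∨ A a σ = 1)
    (hAcol : ∀ σ : S, ∃ a : S', A a σ = 1)
    (hcorrect : ∀ (a : S') (σ : S), (A * M) a σ ≤ (M' * A) a σ) :
    (⨆ (k : ℕ) (_ : 1 ≤ k), root (⨆ σ : S, (M ^ k) σ σ) k) ≤
      ⨆ (k : ℕ) (_ : 1 ≤ k), root (⨆ σ : S', (M' ^ k) σ σ) k := by
  have : CanonicallyOrderedAdd Q := canonicallyOrderedAdd_of_le_iff_add_eq hle
  have : IsOrderedAddMonoid Q := CanonicallyOrderedAdd.toIsOrderedAddMonoid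
  have hA₀ : ∀ a σ, A a σ = 0 ∨ A a σ = 1 := by simpa only [bot_eq_zero] using hA
  exact iSup_root_le_of_forall_exists_pow_le hsel root hroot hroot_unique _ _ fun k _ =>
    exists_pow_trace_le_of_abstraction hsel hA₀ hAcol hcorrect k

/-- Let `Q` be a selective cost dioid and `(M, M#, A)` a correct linear
abstraction with `A` a `⊥`/`e` matrix each column of which contains at least one `e`.
Then the long-run costs satisfy `ρ(M) ≤ ρ(M#)` where `ρ(N) = ⨆ k ≥ 1, √[k]{tr (N ^ k)}`. -/
theorem stmt_10 {Q : Type*} [CommSemiring Q] [CompleteLattice Q]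
    (hidem : ∀ a : Q, a + a = a)
    (hle : ∀ a b : Q, a ≤ b ↔ a + b = b)
    (hsup : ∀ a b : Q, a ⊔ b = a + b)
    (hbot : (⊥ : Q) = 0)
    (hdistrib : ∀ (a : Q) (X : Set Q), a * sSup X = ⨆ x ∈ X, a * x)
    (root : Q → ℕ → Q)
    (hroot : ∀ (q : Q) (n : ℕ), 1 ≤ n → root q n ^ n = q)
    (hroot_unique : ∀ (q x : Q) (n : ℕ), 1 ≤ n → x ^ n = q → x = root q n)
    (hlsc : ∀ (n : ℕ), 1 ≤ n → ∀ X : Set Q, sSup X ^ n = ⨆ x ∈ X, x ^ n)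
    (hsel : ∀ a b : Q, a + b = a ∨ a + b = b)
    {S S' : Type*} [Fintype S] [DecidableEq S] [Fintype S'] [DecidableEq S']
    (A : Matrix S' S Q) (M : Matrix S S Q) (M' : Matrix S' S' Q)
    (hA : ∀ (a : S') (σ : S), A a σ = ⊥ ∨ A a σ = 1)
    (hAcol : ∀ σ : S, ∃ a : S', A a σ = 1)
    (hcorrect : ∀ (a : S') (σ : S), (A * M) a σ ≤ (M' * A) a σ) :
    (⨆ (k : ℕ) (_ : 1 ≤ k), root (⨆ σ : S, (M ^ k) σ σ) k) ≤
      ⨆ (k : ℕ) (_ : 1 ≤ k), root (⨆ σ : S', (M' ^ k) σ σ) k :=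
  stmt_10_general hle root hroot hroot_unique hsel A M M' hA hAcol hcorrect
end
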